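/- arXiv:1511.01207 — 3 statements merged into one kernel-verified Lean document; each statement's English description precedes it below -/
import Mathlib

section
/- Let ℳ = 𝒮 × ℋ be an n-bounded discrete market. If 𝒮 is locally 0-neutral, then for the identically zero payoff Z = 0 one has U̲₀(s₀, 0, ℳ) = Ū₀(s₀, 0, ℳ) = 0. -/
open scoped BigOperators

structure Portfolio where
  pos : ℕ → (ℕ → ℝ) → ℝ
  N : (ℕ → ℝ) → ℕ

structure Market where
  s0 : ℝ
  T : Set (ℕ → ℝ)
  P : Set Portfolio
  start : ∀ S ∈ T, S 0 = s0
  nonanticipative : ∀ H ∈ P, ∀ i : ℕ, ∀ S ∈ T, ∀ S' ∈ T,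
    (∀ k ≤ i, S k = S' k) → H.pos i S = H.pos i S'
  liquidate : ∀ H ∈ P, ∀ S ∈ T, ∀ k : ℕ, H.N S ≤ k → H.pos k S = 0
  zero_mem : (⟨fun _ _ => 0, fun _ => 0⟩ : Portfolio) ∈ P

def StoppingTime (T : Set (ℕ → ℝ)) (ν : (ℕ → ℝ) → ℕ) : Prop :=
  ∀ S ∈ T, ∀ S' ∈ T, (∀ k ≤ ν S, S' k = S k) → ν S' = ν S

namespace Market

/-- The conditional trajectory set `𝒮_(S,k)`. -/
def cond (M : Market) (S : ℕ → ℝ) (k : ℕ) : Set (ℕ → ℝ) :=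
  {S' | S' ∈ M.T ∧ ∀ i ≤ k, S' i = S i}

/-- The conditional upper minmax bound `V̄_k(S, Z, ℳ)`. -/
noncomputable def Vbar (M : Market) (k : ℕ) (S : ℕ → ℝ) (Z : (ℕ → ℝ) → ℝ) : EReal :=
  ⨅ H ∈ M.P, ⨆ S' ∈ M.cond S k,
    ((Z S' - ∑ i ∈ Finset.Ico k (H.N S'), H.pos i S' * (S' (i + 1) - S' i) : ℝ) : EReal)

/-- The conditional lower minmax bound `V̲_k(S, Z, ℳ) = -V̄_k(S, -Z, ℳ)`. -/
noncomputable def Vlow (M : Market) (k : ℕ) (S : ℕ → ℝ) (Z : (ℕ → ℝ) → ℝ) : EReal :=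
  - M.Vbar k S (fun S' => - Z S')

/-- The node `(S, j)` is 0-neutral. -/
def ZeroNeutralNode (M : Market) (S : ℕ → ℝ) (j : ℕ) : Prop :=
  0 ≤ (⨆ S' ∈ M.cond S j, ((S' (j + 1) - S j : ℝ) : EReal)) ∧
    (⨅ S' ∈ M.cond S j, ((S' (j + 1) - S j : ℝ) : EReal)) ≤ 0

/-- The node `(S, j)` satisfies the up-down property. -/
def UpDownNode (M : Market) (S : ℕ → ℝ) (j : ℕ) : Prop :=
  0 < (⨆ S' ∈ M.cond S j, ((S' (j + 1) - S j : ℝ) : EReal)) ∧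
    (⨅ S' ∈ M.cond S j, ((S' (j + 1) - S j : ℝ) : EReal)) < 0

/-- Positive arbitrage node. -/
def PosArbNode (M : Market) (S : ℕ → ℝ) (j : ℕ) : Prop :=
  0 < (⨆ S' ∈ M.cond S j, ((S' (j + 1) - S j : ℝ) : EReal)) ∧
    (⨅ S' ∈ M.cond S j, ((S' (j + 1) - S j : ℝ) : EReal)) = 0

/-- Negative arbitrage node. -/
def NegArbNode (M : Market) (S : ℕ → ℝ) (j : ℕ) : Prop :=
  (⨆ S' ∈ M.cond S j, ((S' (j + 1) - S j : ℝ) : EReal)) = 0 ∧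
    (⨅ S' ∈ M.cond S j, ((S' (j + 1) - S j : ℝ) : EReal)) < 0

def LocallyZeroNeutral (M : Market) : Prop :=
  ∀ S ∈ M.T, ∀ j : ℕ, M.ZeroNeutralNode S j

/-- `ℳ` is `n`-bounded. -/
def NBounded (M : Market) (n : ℕ) : Prop :=
  ∀ H ∈ M.P, ∀ S ∈ M.T, H.N S ≤ n

/-- `M(S) = sup_{H ∈ ℋ} N_H(S)`. -/
noncomputable def Mx (M : Market) (S : ℕ → ℝ) : ℕ :=
  sSup ((fun H : Portfolio => H.N S) '' M.P)

/-- `I^k_S = {H_k(S) : H ∈ ℋ}`. -/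
def Iset (M : Market) (k : ℕ) (S : ℕ → ℝ) : Set ℝ :=
  {u : ℝ | ∃ H ∈ M.P, H.pos k S = u}

/-- `U` is the family of dynamic bounds `Ū_i(·, Z, ℳ)` (EReal-valued version,
with the local infimum taken over portfolios). -/
def IsDynU (M : Market) (Z : (ℕ → ℝ) → ℝ) (U : ℕ → (ℕ → ℝ) → EReal) : Prop :=
  ∀ S ∈ M.T,
    (∀ i : ℕ, M.Mx S < i → U i S = 0) ∧
    U (M.Mx S) S = (Z S : EReal) ∧
    ∀ i : ℕ, i < M.Mx S →
      U i S = ⨅ H ∈ M.P, ⨆ S' ∈ M.cond S i,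
        (U (i + 1) S' - ((H.pos i S * (S' (i + 1) - S i) : ℝ) : EReal))

/-- `U` is the family of dynamic bounds `Ū_i(·, Z, ℳ)` (finite, real-valued version,
with the local infimum taken over `I^i_S`). -/
def IsDynUR (M : Market) (Z : (ℕ → ℝ) → ℝ) (U : ℕ → (ℕ → ℝ) → ℝ) : Prop :=
  ∀ S ∈ M.T,
    (∀ i : ℕ, M.Mx S < i → U i S = 0) ∧
    U (M.Mx S) S = Z S ∧
    ∀ i : ℕ, i < M.Mx S →
      ((U i S : ℝ) : EReal) = ⨅ u ∈ M.Iset i S, ⨆ S' ∈ M.cond S i,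
        ((U (i + 1) S' - u * (S' (i + 1) - S i) : ℝ) : EReal)

/-- `ℳ` is u-complete with respect to `Z` (relative to the dynamic bounds `U`). -/
def UComplete (M : Market) (Z : (ℕ → ℝ) → ℝ) (U : ℕ → (ℕ → ℝ) → EReal) : Prop :=
  ∀ S ∈ M.T, ∀ k : ℕ, 1 ≤ k → k < M.Mx S →
    ∃ H ∈ M.P, U k S = ⨆ S' ∈ M.cond S k,
      (U (k + 1) S' - ((H.pos k S * (S' (k + 1) - S k) : ℝ) : EReal))

/-- The portfolio set of `ℳ` is FULL. -/
def IsFULL (M : Market) : Prop :=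
  ∀ k : ℕ, ∀ Sstar ∈ M.T, ∀ j : ℕ, k ≤ j →
    ∀ f : (ℕ → ℝ) → ℝ,
      (∀ S ∈ M.cond Sstar k, ∃ H ∈ M.P, ∃ S' ∈ M.cond Sstar k, H.pos j S' = f S) →
      (∀ S ∈ M.cond Sstar k, ∀ S' ∈ M.cond Sstar k, (∀ l ≤ j, S l = S' l) → f S = f S') →
      ∃ H ∈ M.P, ∀ S ∈ M.cond Sstar k, H.pos j S = f S

/-- `𝒮⁺_(S,i)`. -/
def Splus (M : Market) (S : ℕ → ℝ) (i : ℕ) : Set (ℕ → ℝ) :=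
  {S' | S' ∈ M.cond S i ∧ S i < S' (i + 1)}

/-- `𝒮⁻_(S,i)`. -/
def Sminus (M : Market) (S : ℕ → ℝ) (i : ℕ) : Set (ℕ → ℝ) :=
  {S' | S' ∈ M.cond S i ∧ S' (i + 1) ≤ S i}

/-- `𝒮⁺_(S,i)` with the strict inequality interchanged. -/
def SplusAlt (M : Market) (S : ℕ → ℝ) (i : ℕ) : Set (ℕ → ℝ) :=
  {S' | S' ∈ M.cond S i ∧ S i ≤ S' (i + 1)}

/-- `𝒮⁻_(S,i)` with the strict inequality interchanged. -/
def SminusAlt (M : Market) (S : ℕ → ℝ) (i : ℕ) : Set (ℕ → ℝ) :=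
  {S' | S' ∈ M.cond S i ∧ S' (i + 1) < S i}

/-- `𝒮^=_(S,i)`. -/
def Seq (M : Market) (S : ℕ → ℝ) (i : ℕ) : Set (ℕ → ℝ) :=
  {S' | S' ∈ M.cond S i ∧ S' (i + 1) = S i}

end Market

/-- The slope `u_(S⁺,S⁻)` of the chord joining the graph points of `Ū_{i+1}`. -/
noncomputable def chSlope (U : ℕ → (ℕ → ℝ) → ℝ) (i : ℕ) (Sp Sm : ℕ → ℝ) : ℝ :=
  (U (i + 1) Sp - U (i + 1) Sm) / (Sp (i + 1) - Sm (i + 1))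

namespace Market

/-- The convex hull quantity `L_i(S, Z, ℳ)`. -/
noncomputable def Lval (M : Market) (U : ℕ → (ℕ → ℝ) → ℝ) (S : ℕ → ℝ) (i : ℕ) : EReal :=
  ⨆ Sp ∈ M.Splus S i, ⨆ Sm ∈ M.Sminus S i,
    ((U (i + 1) Sp - chSlope U i Sp Sm * (Sp (i + 1) - S i) : ℝ) : EReal)

/-- The convex hull quantity `L_i(S, Z, ℳ)` with the roles of the strict and
non-strict inequalities interchanged. -/
noncomputable def LvalAlt (M : Market) (U : ℕ → (ℕ → ℝ) → ℝ) (S : ℕ → ℝ) (i : ℕ) : EReal :=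
  ⨆ Sp ∈ M.SplusAlt S i, ⨆ Sm ∈ M.SminusAlt S i,
    ((U (i + 1) Sp - chSlope U i Sp Sm * (Sp (i + 1) - S i) : ℝ) : EReal)

end Market

/-- The nested supremum appearing in the iterated expression of the global bound:
`nestedSup M H Z r k S` is the `r`-fold nested supremum starting at stage `k` from
the trajectory `S`. -/
noncomputable def nestedSup (M : Market) (H : Portfolio) (Z : (ℕ → ℝ) → ℝ) :
    ℕ → ℕ → (ℕ → ℝ) → EReal
  | 0, _, S => ((Z S : ℝ) : EReal)
  | r + 1, k, S => ⨆ S' ∈ M.cond S k,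
      (((-(H.pos k S' * (S' (k + 1) - S' k)) : ℝ) : EReal) + nestedSup M H Z r (k + 1) S')

/-!
Backward induction from the horizon `n`, beyond which every bound of the zero payoff is `0`. At a
node whose successors all carry the bound `0`, the zero portfolio shows `Ū_i ≤ 0`; conversely, since
the next increment can be made `≥ -ε` and `≤ ε` for every `ε > 0`, no position `u` guarantees a
strictly positive gain `u ΔS`, so the worst case of `-u ΔS` is `≥ 0` and `Ū_i ≥ 0`.
-/

theorem EReal.zero_le_iSup₂_neg_mul {α : Type*} {s : Set α} {f : α → ℝ} (hs : s.Nonempty)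
    (hsup : 0 ≤ ⨆ x ∈ s, (f x : EReal)) (hinf : ⨅ x ∈ s, (f x : EReal) ≤ 0) (u : ℝ) :
    0 ≤ ⨆ x ∈ s, -((u * f x : ℝ) : EReal) := by
  by_contra! hneg
  obtain ⟨r, hlt, hr⟩ := EReal.exists_between_coe_real hneg
  have hr : r < 0 := mod_cast hr
  have hgain : ∀ x ∈ s, -r < u * f x := fun x hx => by
    have := (le_iSup₂ (f := fun x _ => -((u * f x : ℝ) : EReal)) x hx).trans_lt hlt
    rw [← EReal.coe_neg, EReal.coe_lt_coe_iff] at this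
    linarith
  rcases lt_trichotomy u 0 with hu | rfl | hu
  · have hle : ⨆ x ∈ s, (f x : EReal) ≤ ((-r / u : ℝ) : EReal) :=
      iSup₂_le fun x hx => EReal.coe_le_coe_iff.2 <| (le_div_iff_of_neg hu).2 <| by
        linarith [hgain x hx, mul_comm u (f x)]
    have : (0 : ℝ) ≤ -r / u := mod_cast hsup.trans hle
    linarith [div_neg_of_pos_of_neg (neg_pos.2 hr) hu]
  · obtain ⟨x, hx⟩ := hs
    linarith [hgain x hx, zero_mul (f x)]
  · have hle : ((-r / u : ℝ) : EReal) ≤ ⨅ x ∈ s, (f x : EReal) :=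
      le_iInf₂ fun x hx => EReal.coe_le_coe_iff.2 <| (div_le_iff₀ hu).2 <| by
        linarith [hgain x hx, mul_comm u (f x)]
    have : -r / u ≤ (0 : ℝ) := mod_cast hle.trans hinf
    linarith [_root_.div_pos (neg_pos.2 hr) hu]

namespace Market

variable {M : Market} {S : ℕ → ℝ} {i : ℕ}

theorem mem_cond_self (hS : S ∈ M.T) (i : ℕ) : S ∈ M.cond S i :=
  ⟨hS, fun _ _ => rfl⟩

theorem NBounded.mx_le {n : ℕ} (hn : M.NBounded n) (hS : S ∈ M.T) : M.Mx S ≤ n :=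
  csSup_le ⟨_, _, M.zero_mem, rfl⟩ fun _ ⟨H, hH, hN⟩ => hN ▸ hn H hH S hS

theorem ZeroNeutralNode.iInf_iSup_neg_mul_eq_zero (h : M.ZeroNeutralNode S i) (hS : S ∈ M.T) :
    ⨅ H ∈ M.P, ⨆ S' ∈ M.cond S i, -((H.pos i S * (S' (i + 1) - S i) : ℝ) : EReal) = 0 := by
  apply le_antisymm
  · refine iInf₂_le_of_le _ M.zero_mem (iSup₂_le fun _ _ => ?_)
    simp
  · exact le_iInf₂ fun H _ =>
      EReal.zero_le_iSup₂_neg_mul ⟨S, mem_cond_self hS i⟩ h.1 h.2 (H.pos i S)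

variable {U : ℕ → (ℕ → ℝ) → EReal}

theorem IsDynU.apply_eq_zero_of_mx_le (hU : M.IsDynU (fun _ => 0) U) (hS : S ∈ M.T)
    (hi : M.Mx S ≤ i) : U i S = 0 := by
  obtain ⟨hafter, hterminal, -⟩ := hU S hS
  rcases hi.lt_or_eq with hi | rfl
  · exact hafter i hi
  · exact hterminal.trans EReal.coe_zero

theorem IsDynU.apply_eq_zero_of_succ (hU : M.IsDynU (fun _ => 0) U) (hS : S ∈ M.T)
    (hloc : M.LocallyZeroNeutral) (hsucc : ∀ S' ∈ M.cond S i, U (i + 1) S' = 0) :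
    U i S = 0 := by
  rcases lt_or_ge i (M.Mx S) with hi | hi
  · rw [(hU S hS).2.2 i hi, ← (hloc S hS i).iInf_iSup_neg_mul_eq_zero hS]
    refine biInf_congr fun H _ => biSup_congr fun S' hS' => ?_
    rw [hsucc S' hS', zero_sub]
  · exact hU.apply_eq_zero_of_mx_le hS hi

theorem IsDynU.apply_eq_zero {n : ℕ} (hn : M.NBounded n) (hloc : M.LocallyZeroNeutral)
    (hU : M.IsDynU (fun _ => 0) U) (i : ℕ) (hS : S ∈ M.T) : U i S = 0 := by
  rcases le_total n i with hi | hi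
  · exact hU.apply_eq_zero_of_mx_le hS ((hn.mx_le hS).trans hi)
  · induction hi using Nat.decreasingInduction generalizing S with
    | self => exact hU.apply_eq_zero_of_mx_le hS (hn.mx_le hS)
    | of_succ k _ ih => exact hU.apply_eq_zero_of_succ hS hloc fun S' hS' => ih hS'.1

end Market

/-- in an `n`-bounded market with a locally 0-neutral trajectory set, the
dynamic bounds of the zero payoff vanish: `U̲₀(s₀, 0, ℳ) = Ū₀(s₀, 0, ℳ) = 0`. -/
theorem dynamic_bounds_zero_payoff (n : ℕ) (M : Market) (hn : M.NBounded n)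
    (hloc : M.LocallyZeroNeutral)
    (U U' : ℕ → (ℕ → ℝ) → EReal)
    (hU : M.IsDynU (fun _ => (0 : ℝ)) U) (hU' : M.IsDynU (fun _ => -(0 : ℝ)) U')
    (S : ℕ → ℝ) (hS : S ∈ M.T) :
    - U' 0 S = 0 ∧ U 0 S = 0 := by
  rw [neg_zero] at hU'
  rw [hU'.apply_eq_zero hn hloc 0 hS, hU.apply_eq_zero hn hloc 0 hS]
  exact ⟨neg_zero, rfl⟩
end

section
/- Let ℳ = 𝒮 × ℋ be an n-bounded discrete market such that 𝒮 is locally 0-neutral, Z a function on 𝒮, S* ∈ 𝒮 fixed and k ≥ 0. If there exist b ∈ ℝ and H^b ∈ ℋ such that Z(S) ≥ Σ_{i=k}^{N_{H^b}(S)−1} H^b_i(S) Δ_i S + b for all S ∈ 𝒮_(S*,k), then V̄_k(S*, Z, ℳ) > −∞. -/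
open scoped BigOperators

/-!
Against a portfolio `H`, trade the difference `Hᵇ - H`, which is again non-anticipative. At
each node, local 0-neutrality provides a next price move, almost up for a long position and
almost down for a short one, on which the position loses less than any prescribed `ε > 0`.
Spending `ε/2` on the first step and `ε/2` on the rest yields a trajectory in `𝒮_(S*,k)`
along which `Hᵇ - H` gains at least `-1` up to time `k + n`; by `n`-boundedness neither
portfolio trades afterwards. On that trajectory `Z - (gain of H) ≥ b - 1`, hence
`V̄_k(S*, Z, ℳ) ≥ b - 1`.
-/

def gain (G : ℕ → (ℕ → ℝ) → ℝ) (S : ℕ → ℝ) (a c : ℕ) : ℝ :=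
  ∑ i ∈ Finset.Ico a c, G i S * (S (i + 1) - S i)

lemma gain_sub (G H : ℕ → (ℕ → ℝ) → ℝ) (S : ℕ → ℝ) (a c : ℕ) :
    gain (G - H) S a c = gain G S a c - gain H S a c := by
  simp only [gain, Pi.sub_apply, sub_mul, Finset.sum_sub_distrib]

lemma gain_add_succ (G : ℕ → (ℕ → ℝ) → ℝ) (S : ℕ → ℝ) (j m : ℕ) :
    gain G S j (j + (m + 1)) = G j S * (S (j + 1) - S j) + gain G S (j + 1) (j + 1 + m) := by
  rw [gain, show j + (m + 1) = j + 1 + m by omega]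
  exact Finset.sum_eq_sum_Ico_succ_bot (by omega) _

def NonAnticipative (T : Set (ℕ → ℝ)) (G : ℕ → (ℕ → ℝ) → ℝ) : Prop :=
  ∀ i, ∀ S ∈ T, ∀ S' ∈ T, (∀ l ≤ i, S l = S' l) → G i S = G i S'

lemma NonAnticipative.sub {T : Set (ℕ → ℝ)} {G H : ℕ → (ℕ → ℝ) → ℝ}
    (hG : NonAnticipative T G) (hH : NonAnticipative T H) : NonAnticipative T (G - H) :=
  fun i S hS S' hS' h => by simp only [Pi.sub_apply, hG i S hS S' hS' h, hH i S hS S' hS' h]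

namespace Market

variable {M : Market} {S : ℕ → ℝ} {j : ℕ}

lemma nonAnticipative_pos {H : Portfolio} (hH : H ∈ M.P) : NonAnticipative M.T H.pos :=
  M.nonanticipative H hH

lemma gain_pos_eq_of_N_le {H : Portfolio} (hH : H ∈ M.P) (hS : S ∈ M.T) (a c : ℕ)
    (hc : H.N S ≤ c) : gain H.pos S a (H.N S) = gain H.pos S a c := by
  refine Finset.sum_subset (Finset.Ico_subset_Ico_right hc) fun i hi hni => ?_
  have hNi : H.N S ≤ i := by
    simp only [Finset.mem_Ico, not_and, not_lt] at hi hni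
    exact hni hi.1
  rw [M.liquidate H hH S hS i hNi, zero_mul]

lemma exists_mem_cond_neg_lt_of_zeroNeutralNode (h : M.ZeroNeutralNode S j) {δ : ℝ}
    (hδ : 0 < δ) : ∃ S₁ ∈ M.cond S j, -δ < S₁ (j + 1) - S j := by
  have hlt : ((-δ : ℝ) : EReal) < ⨆ S' ∈ M.cond S j, ((S' (j + 1) - S j : ℝ) : EReal) :=
    lt_of_lt_of_le (by exact_mod_cast neg_neg_of_pos hδ) h.1
  simpa only [lt_iSup_iff, EReal.coe_lt_coe_iff, exists_prop] using hlt

lemma exists_mem_cond_lt_of_zeroNeutralNode (h : M.ZeroNeutralNode S j) {δ : ℝ}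
    (hδ : 0 < δ) : ∃ S₁ ∈ M.cond S j, S₁ (j + 1) - S j < δ := by
  have hlt : (⨅ S' ∈ M.cond S j, ((S' (j + 1) - S j : ℝ) : EReal)) < ((δ : ℝ) : EReal) :=
    lt_of_le_of_lt h.2 (by exact_mod_cast hδ)
  simpa only [iInf_lt_iff, EReal.coe_lt_coe_iff, exists_prop] using hlt

lemma exists_mem_cond_neg_le_mul_of_zeroNeutralNode (h : M.ZeroNeutralNode S j) (g : ℝ)
    {ε : ℝ} (hε : 0 < ε) : ∃ S₁ ∈ M.cond S j, -ε ≤ g * (S₁ (j + 1) - S j) := by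
  set δ := ε / (|g| + 1)
  have hg1 : 0 < |g| + 1 := by positivity
  have hδ : 0 < δ := by positivity
  have hscale : |g| * δ ≤ ε := by
    rw [mul_div_assoc', div_le_iff₀ hg1]
    linarith
  rcases le_or_gt 0 g with hg | hg
  · obtain ⟨S₁, hS₁, hmove⟩ := exists_mem_cond_neg_lt_of_zeroNeutralNode h hδ
    refine ⟨S₁, hS₁, ?_⟩
    nlinarith [mul_le_mul_of_nonneg_left hmove.le hg, le_abs_self g]
  · obtain ⟨S₁, hS₁, hmove⟩ := exists_mem_cond_lt_of_zeroNeutralNode h hδ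
    refine ⟨S₁, hS₁, ?_⟩
    nlinarith [mul_lt_mul_of_neg_left hmove hg, neg_le_abs g]

lemma cond_trans {S₁ S₂ : ℕ → ℝ} (h₁ : S₁ ∈ M.cond S j) (h₂ : S₂ ∈ M.cond S₁ (j + 1)) :
    S₂ ∈ M.cond S j :=
  ⟨h₂.1, fun l hl => (h₂.2 l (by omega)).trans (h₁.2 l hl)⟩

lemma exists_mem_cond_neg_le_gain (hloc : M.LocallyZeroNeutral) {G : ℕ → (ℕ → ℝ) → ℝ}
    (hG : NonAnticipative M.T G) (m : ℕ) :
    ∀ {ε : ℝ}, 0 < ε → ∀ j, ∀ S ∈ M.T, ∃ S' ∈ M.cond S j, -ε ≤ gain G S' j (j + m) := by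
  induction m with
  | zero =>
    intro ε hε j S hS
    exact ⟨S, ⟨hS, fun _ _ => rfl⟩, by simp [gain, hε.le]⟩
  | succ m ih =>
    intro ε hε j S hS
    obtain ⟨S₁, hS₁, hstep⟩ :=
      exists_mem_cond_neg_le_mul_of_zeroNeutralNode (hloc S hS j) (G j S) (half_pos hε)
    obtain ⟨S', hS', htail⟩ := ih (half_pos hε) (j + 1) S₁ hS₁.1
    have hS'S : S' ∈ M.cond S j := cond_trans hS₁ hS'
    have hhead : G j S' * (S' (j + 1) - S' j) = G j S * (S₁ (j + 1) - S j) := by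
      rw [hG j S' hS'S.1 S hS hS'S.2, hS'.2 (j + 1) le_rfl, hS'S.2 j le_rfl]
    refine ⟨S', hS'S, ?_⟩
    rw [gain_add_succ, hhead]
    linarith

end Market

/-- in an `n`-bounded market with a locally 0-neutral trajectory set, the
existence of an underhedging strategy on `𝒮_(S*,k)` implies `V̄_k(S*, Z, ℳ) > -∞`. -/
theorem finiteness_lower (n : ℕ) (M : Market) (hn : M.NBounded n)
    (hloc : M.LocallyZeroNeutral)
    (Z : (ℕ → ℝ) → ℝ) (Sstar : ℕ → ℝ) (hSstar : Sstar ∈ M.T) (k : ℕ)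
    (b : ℝ) (Hb : Portfolio) (hHb : Hb ∈ M.P)
    (hsub : ∀ S ∈ M.cond Sstar k,
      ∑ i ∈ Finset.Ico k (Hb.N S), Hb.pos i S * (S (i + 1) - S i) + b ≤ Z S) :
    ⊥ < M.Vbar k Sstar Z := by
  refine lt_of_lt_of_le (EReal.bot_lt_coe (b - 1)) (le_iInf₂ fun H hH => ?_)
  obtain ⟨S, hS, hgain⟩ := M.exists_mem_cond_neg_le_gain hloc
    ((M.nonAnticipative_pos hHb).sub (M.nonAnticipative_pos hH)) n one_pos k Sstar hSstar
  have hN : ∀ P ∈ M.P, P.N S ≤ k + n := fun P hP => (hn P hP S hS.1).trans (Nat.le_add_left n k)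
  have hunder : gain Hb.pos S k (k + n) + b ≤ Z S := by
    rw [← M.gain_pos_eq_of_N_le hHb hS.1 k (k + n) (hN Hb hHb)]
    exact hsub S hS
  have hbound : b - 1 ≤ Z S - gain H.pos S k (H.N S) := by
    rw [M.gain_pos_eq_of_N_le hH hS.1 k (k + n) (hN H hH)]
    rw [gain_sub] at hgain
    linarith
  exact le_iSup₂_of_le S hS (by exact_mod_cast hbound)
end

section
/- Let ℳ = 𝒮 × ℋ be an n-bounded discrete market, Z a function on 𝒮, and fix H ∈ ℋ. Then sup_{S∈𝒮} [Z(S) − Σ_{i=0}^{N_H(S)−1} H_i(S) Δ_i S] equals the n-fold nested supremum sup_{S¹∈𝒮} [−H₀(S¹) Δ₀S¹ + sup_{S²∈𝒮_(S¹,1)} [−H₁(S²) Δ₁S² + … + sup_{Sⁿ∈𝒮_(S^{n−1},n−1)} [Z(Sⁿ) − H_{n−1}(S^{n−1}) Δ_{n−1}Sⁿ] … ]]. -/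
open scoped BigOperators

/-! By nonanticipativity the `k`-th trade `H_k(S') Δ_k S'` is constant on `𝒮_(S',k+1)`, so it
can be moved inside the next supremum; the two suprema over `𝒮_(S,k)` and `𝒮_(S',k+1)` then merge
into one over `𝒮_(S,k)`. Iterating, the nested supremum becomes a single supremum of
`Z - ∑_{i<n} H_i ΔS_i`, and by `n`-boundedness the sum may be cut at `N_H`. -/

theorem EReal.coe_add_iSup {ι : Sort*} (c : ℝ) (f : ι → EReal) :
    (c : EReal) + ⨆ i, f i = ⨆ i, (c : EReal) + f i := by
  refine le_antisymm ?_ (iSup_le fun i => add_le_add le_rfl (le_iSup f i))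
  have hc {a b : EReal} : a ≤ b - c ↔ a + c ≤ b :=
    EReal.le_sub_iff_add_le (.inl (EReal.coe_ne_bot c)) (.inl (EReal.coe_ne_top c))
  rw [add_comm, ← hc]
  refine iSup_le fun i => ?_
  rw [hc, add_comm]
  exact le_iSup (fun i => (c : EReal) + f i) i

theorem EReal.coe_add_biSup {α : Type*} (c : ℝ) (s : Set α) (f : α → EReal) :
    (c : EReal) + ⨆ x ∈ s, f x = ⨆ x ∈ s, (c : EReal) + f x := by
  simp only [EReal.coe_add_iSup]

namespace Market

variable {M : Market}

theorem self_mem_cond {S : ℕ → ℝ} (hS : S ∈ M.T) (k : ℕ) : S ∈ M.cond S k :=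
  ⟨hS, fun _ _ => rfl⟩

theorem cond_zero {S : ℕ → ℝ} (hS : S ∈ M.T) : M.cond S 0 = M.T := by
  ext S'
  refine ⟨fun h => h.1, fun h => ⟨h, fun i hi => ?_⟩⟩
  rw [Nat.le_zero.mp hi, M.start S' h, M.start S hS]

theorem mem_cond_of_mem_cond_succ {S S' S'' : ℕ → ℝ} {k : ℕ} (hS' : S' ∈ M.cond S k)
    (hS'' : S'' ∈ M.cond S' (k + 1)) : S'' ∈ M.cond S k :=
  ⟨hS''.1, fun i hi => (hS''.2 i (hi.trans k.le_succ)).trans (hS'.2 i hi)⟩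

theorem iSup_cond_iSup_cond_succ (S : ℕ → ℝ) (k : ℕ) (g : (ℕ → ℝ) → EReal) :
    ⨆ S' ∈ M.cond S k, ⨆ S'' ∈ M.cond S' (k + 1), g S'' = ⨆ S' ∈ M.cond S k, g S' :=
  le_antisymm
    (iSup₂_le fun _ hS' => iSup₂_le fun S'' hS'' =>
      le_iSup₂_of_le S'' (mem_cond_of_mem_cond_succ hS' hS'') le_rfl)
    (iSup₂_le fun S' hS' =>
      le_iSup₂_of_le S' hS' (le_iSup₂_of_le S' (self_mem_cond hS'.1 _) le_rfl))

theorem trade_eq_of_mem_cond_succ {H : Portfolio} (hH : H ∈ M.P) {S' S'' : ℕ → ℝ} {k : ℕ}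
    (hS' : S' ∈ M.T) (hS'' : S'' ∈ M.cond S' (k + 1)) :
    H.pos k S'' * (S'' (k + 1) - S'' k) = H.pos k S' * (S' (k + 1) - S' k) := by
  rw [M.nonanticipative H hH k S'' hS''.1 S' hS' fun i hi => hS''.2 i (hi.trans k.le_succ),
    hS''.2 (k + 1) le_rfl, hS''.2 k k.le_succ]

theorem sum_range_N_eq_sum_range {H : Portfolio} (hH : H ∈ M.P) {S : ℕ → ℝ} (hS : S ∈ M.T)
    {n : ℕ} (hN : H.N S ≤ n) :
    ∑ i ∈ Finset.range (H.N S), H.pos i S * (S (i + 1) - S i)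
      = ∑ i ∈ Finset.range n, H.pos i S * (S (i + 1) - S i) :=
  Finset.sum_subset (Finset.range_subset_range.mpr hN) fun i _ hi => by
    rw [M.liquidate H hH S hS i (by simpa using hi), zero_mul]

end Market

open Market

theorem nestedSup_succ {M : Market} {H : Portfolio} (hH : H ∈ M.P) (Z : (ℕ → ℝ) → ℝ)
    (r k : ℕ) (S : ℕ → ℝ) :
    nestedSup M H Z (r + 1) k S = ⨆ S' ∈ M.cond S k,
      ((Z S' - ∑ i ∈ Finset.Ico k (k + r + 1), H.pos i S' * (S' (i + 1) - S' i) : ℝ) : EReal) := by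
  induction r generalizing k S with
  | zero =>
    simp only [nestedSup, add_zero, Nat.Ico_succ_singleton, Finset.sum_singleton]
    refine biSup_congr fun S' _ => ?_
    rw [← EReal.coe_add, neg_add_eq_sub]
  | succ r ih =>
    calc nestedSup M H Z (r + 2) k S
        = ⨆ S' ∈ M.cond S k, ⨆ S'' ∈ M.cond S' (k + 1), ((Z S'' - ∑ i ∈ Finset.Ico k
            (k + (r + 1) + 1), H.pos i S'' * (S'' (i + 1) - S'' i) : ℝ) : EReal) := by
          rw [nestedSup]
          refine biSup_congr fun S' hS' => ?_
          rw [ih, EReal.coe_add_biSup]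
          refine biSup_congr fun S'' hS'' => ?_
          rw [← EReal.coe_add, Finset.sum_eq_sum_Ico_succ_bot (b := k + (r + 1) + 1) (by omega),
            trade_eq_of_mem_cond_succ hH hS'.1 hS'', show k + 1 + r + 1 = k + (r + 1) + 1 by omega]
          congr 1
          ring
      _ = _ := iSup_cond_iSup_cond_succ S k _

/-- in an `n`-bounded market (`n ≥ 1`), for a fixed portfolio `H ∈ ℋ`, the
global supremum of the hedged payoff equals the `n`-fold nested supremum. -/
theorem moving_sup_inside (n : ℕ) (hn0 : 0 < n) (M : Market) (hn : M.NBounded n)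
    (Z : (ℕ → ℝ) → ℝ) (H : Portfolio) (hH : H ∈ M.P)
    (S : ℕ → ℝ) (hS : S ∈ M.T) :
    (⨆ S' ∈ M.T,
      ((Z S' - ∑ i ∈ Finset.range (H.N S'), H.pos i S' * (S' (i + 1) - S' i) : ℝ) : EReal))
      = nestedSup M H Z n 0 S := by
  obtain ⟨r, rfl⟩ := Nat.exists_eq_succ_of_ne_zero hn0.ne'
  rw [nestedSup_succ hH, cond_zero hS]
  refine biSup_congr fun S' hS' => ?_
  rw [sum_range_N_eq_sum_range hH hS' (hn H hH S' hS'), Finset.range_eq_Ico, zero_add]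
end
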